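/- arXiv:1605.00081 — 2 statements merged into one kernel-verified Lean document; each statement's English description precedes it below -/
import Mathlib

section
/- Let ⊗ be a continuous t-norm on [0,1], let X be a partially ordered compact space, and let A ⊆ X be a closed upper subset. Then: (1) A ≠ ∅ if and only if Φ_A(1) = 1, where 1 denotes the constant function with value 1; (2) A is irreducible if and only if Φ_A(ψ₁⊗ψ₂) = Φ_A(ψ₁)⊗Φ_A(ψ₂) for all ψ₁, ψ₂ ∈ CX. -/
open unitInterval Set

/-- A continuous t-norm on the unit interval `[0,1]`. -/
structure ContinuousTNorm where
  mul : I → I → I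
  comm : ∀ x y, mul x y = mul y x
  assoc : ∀ x y z, mul (mul x y) z = mul x (mul y z)
  mono : ∀ ⦃x₁ x₂ y₁ y₂ : I⦄, x₁ ≤ x₂ → y₁ ≤ y₂ → mul x₁ y₁ ≤ mul x₂ y₂
  continuous : Continuous fun p : I × I => mul p.1 p.2
  one_mul' : ∀ x, mul 1 x = x

/-- The `n`-fold `⊗`-power `xⁿ`. -/
def ContinuousTNorm.pow (T : ContinuousTNorm) (x : I) : ℕ → I
  | 0 => 1
  | n + 1 => T.mul x (T.pow x n)


/-- A continuous antitone (monotone of type `X → [0,1]ᵒᵖ`) map. -/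
structure CMap (X : Type*) [TopologicalSpace X] [Preorder X] where
  toFun : X → I
  continuous' : Continuous toFun
  antitone' : Antitone toFun

namespace CMap

variable {X : Type*} [TopologicalSpace X] [Preorder X]

/-- The constant map `1`. -/
def one : CMap X := ⟨fun _ => 1, continuous_const, fun _ _ _ => le_rfl⟩

/-- Pointwise tensor `ψ₁ ⊗ ψ₂`. -/
def tens (T : ContinuousTNorm) (ψ₁ ψ₂ : CMap X) : CMap X where
  toFun x := T.mul (ψ₁.toFun x) (ψ₂.toFun x)
  continuous' := T.continuous.comp (ψ₁.continuous'.prodMk ψ₂.continuous')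
  antitone' := fun _ _ h => T.mono (ψ₁.antitone' h) (ψ₂.antitone' h)

/-- Pointwise action `u ⊗ ψ` of a scalar `u ∈ [0,1]`. -/
def smul (T : ContinuousTNorm) (u : I) (ψ : CMap X) : CMap X where
  toFun x := T.mul u (ψ.toFun x)
  continuous' := T.continuous.comp (continuous_const.prodMk ψ.continuous')
  antitone' := fun _ _ h => T.mono le_rfl (ψ.antitone' h)

/-- Pointwise binary supremum `ψ₁ ∨ ψ₂`. -/
noncomputable def sup (ψ₁ ψ₂ : CMap X) : CMap X where
  toFun x := max (ψ₁.toFun x) (ψ₂.toFun x)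
  continuous' := ψ₁.continuous'.max ψ₂.continuous'
  antitone' := fun _ _ h => max_le_max (ψ₁.antitone' h) (ψ₂.antitone' h)

/-- Truncated subtraction in `[0,1]`. -/
noncomputable def tsubI (a u : I) : I :=
  ⟨max ((a : ℝ) - u) 0, ⟨le_max_right _ _,
    max_le (by linarith [a.2.2, u.2.1]) zero_le_one⟩⟩

/-- Pointwise truncated subtraction `ψ ⊖ u`. -/
noncomputable def tsub (ψ : CMap X) (u : I) : CMap X where
  toFun x := tsubI (ψ.toFun x) u
  continuous' := by
    apply Continuous.subtype_mk
    exact ((continuous_subtype_val.comp ψ.continuous').sub continuous_const).max continuous_const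
  antitone' := fun a b h =>
    Subtype.mk_le_mk.mpr
      (max_le_max (sub_le_sub_right (Subtype.coe_le_coe.2 (ψ.antitone' h)) _) le_rfl)

end CMap


section Conditions

variable {X : Type*} [TopologicalSpace X] [Preorder X]

/-- `(Mon)`: `Φ` is monotone. -/
def Mon (Φ : CMap X → I) : Prop :=
  ∀ ψ₁ ψ₂ : CMap X, (∀ x, ψ₁.toFun x ≤ ψ₂.toFun x) → Φ ψ₁ ≤ Φ ψ₂

/-- `(Act)`: `Φ(u ⊗ ψ) = u ⊗ Φ(ψ)`. -/
def Act (T : ContinuousTNorm) (Φ : CMap X → I) : Prop :=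
  ∀ (u : I) (ψ : CMap X), Φ (CMap.smul T u ψ) = T.mul u (Φ ψ)

/-- `(Sup)`: `Φ(ψ₁ ∨ ψ₂) = Φ(ψ₁) ∨ Φ(ψ₂)`. -/
def SupC (Φ : CMap X → I) : Prop :=
  ∀ ψ₁ ψ₂ : CMap X, Φ (ψ₁.sup ψ₂) = max (Φ ψ₁) (Φ ψ₂)

/-- `(Ten)lax`: `Φ(ψ₁ ⊗ ψ₂) ≤ Φ(ψ₁) ⊗ Φ(ψ₂)`. -/
def TenLax (T : ContinuousTNorm) (Φ : CMap X → I) : Prop :=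
  ∀ ψ₁ ψ₂ : CMap X, Φ (CMap.tens T ψ₁ ψ₂) ≤ T.mul (Φ ψ₁) (Φ ψ₂)

/-- `(Ten)`: `Φ(ψ₁ ⊗ ψ₂) = Φ(ψ₁) ⊗ Φ(ψ₂)`. -/
def TenC (T : ContinuousTNorm) (Φ : CMap X → I) : Prop :=
  ∀ ψ₁ ψ₂ : CMap X, Φ (CMap.tens T ψ₁ ψ₂) = T.mul (Φ ψ₁) (Φ ψ₂)

/-- `(Top)`: `Φ(1) = 1`. -/
def TopC (Φ : CMap X → I) : Prop := Φ CMap.one = 1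

/-- `(Min)`: `Φ(ψ ⊖ u) = Φ(ψ) ⊖ u`. -/
noncomputable def MinC (Φ : CMap X → I) : Prop :=
  ∀ (u : I) (ψ : CMap X), Φ (ψ.tsub u) = CMap.tsubI (Φ ψ) u

/-- Condition `(A)`. -/
def CondA (Φ : CMap X → I) : Prop :=
  ∀ (x : X) (ψ : CMap X), Φ ψ = 0 → 0 < ψ.toFun x →
    ∃ ψ' : CMap X, ψ'.toFun x = 1 ∧ Φ ψ' = 0

/-- `Zero(Φ) = ⋂ {Zero ψ | Φ ψ = 0}`. -/
def ZeroPhi (Φ : CMap X → I) : Set X := {x | ∀ ψ : CMap X, Φ ψ = 0 → ψ.toFun x = 0}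

/-- `Anti(Φ)`. -/
def AntiPhi (Φ : CMap X → I) : Set X := {x | ∀ ψ : CMap X, ψ.toFun x ≤ Φ ψ}

/-- `Φ_A(ψ) = sup_{x ∈ A} ψ(x)`, with `Φ_∅ = 0`. -/
noncomputable def PhiA (A : Set X) (ψ : CMap X) : I :=
  ⟨sSup ((fun x => (ψ.toFun x : ℝ)) '' A),
   ⟨Real.sSup_nonneg (by rintro r ⟨x, _, rfl⟩; exact (ψ.toFun x).2.1),
    Real.sSup_le (by rintro r ⟨x, _, rfl⟩; exact (ψ.toFun x).2.2) zero_le_one⟩⟩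

end Conditions


/-!
Part (1) is immediate from the definition of `Φ_A`. For part (2), if `A` is irreducible and
`t < Φ_A ψ₁ ⊗ Φ_A ψ₂`, continuity of `⊗` gives `a < Φ_A ψ₁` and `b < Φ_A ψ₂` with `t < a ⊗ b`.
The closed upper sets `A ∩ {ψ₁ ≤ a}` and `A ∩ {ψ₂ ≤ b}` are both proper in `A`, so they do not
cover it, and a point of `A` outside both shows `t < Φ_A (ψ₁ ⊗ ψ₂)`.

Conversely, if `A = A₁ ∪ A₂` with `a ∈ A \ A₁` and `b ∈ A \ A₂`, Nachbin's monotone Urysohn lemma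
gives antitone `ψ₁, ψ₂` with `ψ₁ a = ψ₂ b = 1` vanishing on `A₁`, resp. `A₂`; then
`Φ_A (ψ₁ ⊗ ψ₂) = 0` while `Φ_A ψ₁ ⊗ Φ_A ψ₂ = 1`. The monotone Urysohn lemma comes from Mathlib's
Urysohn construction run with lower open sets only, which a compact pospace supplies because
disjoint closed lower and upper sets have disjoint open lower and upper neighbourhoods.
-/

open Filter Topology

namespace ContinuousTNorm

variable (T : ContinuousTNorm)

theorem mul_zero (x : I) : T.mul x 0 = 0 :=
  le_antisymm (by simpa only [T.one_mul'] using T.mono (le_one' : x ≤ 1) le_rfl) nonneg'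

theorem zero_mul (x : I) : T.mul 0 x = 0 := by
  rw [T.comm, T.mul_zero]

theorem exists_lt_lt_of_lt_mul {a b t : I} (ha : 0 < a) (hb : 0 < b) (ht : t < T.mul a b) :
    ∃ a' < a, ∃ b' < b, t < T.mul a' b' := by
  have : (𝓝[<] a).NeBot := nhdsLT_neBot_of_exists_lt ⟨0, ha⟩
  have : (𝓝[<] b).NeBot := nhdsLT_neBot_of_exists_lt ⟨0, hb⟩
  have hmul : Tendsto (fun p : I × I => T.mul p.1 p.2) (𝓝[<] a ×ˢ 𝓝[<] b) (𝓝 (T.mul a b)) :=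
    (T.continuous.tendsto (a, b)).mono_left
      (nhds_prod_eq (x := a) (y := b) ▸ prod_mono nhdsWithin_le_nhds nhdsWithin_le_nhds)
  obtain ⟨⟨a', b'⟩, ⟨ha', hb'⟩, hlt⟩ :=
    ((eventually_mem_nhdsWithin.prod_mk eventually_mem_nhdsWithin).and
      (hmul.eventually (lt_mem_nhds ht))).exists
  exact ⟨a', ha', b', hb', hlt⟩

end ContinuousTNorm

section PhiA

variable {X : Type*} [TopologicalSpace X] [Preorder X] {A : Set X} {ψ : CMap X}

theorem le_phiA {x : X} (hx : x ∈ A) : ψ.toFun x ≤ PhiA A ψ :=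
  Subtype.coe_le_coe.1 <|
    le_csSup ⟨1, by rintro r ⟨y, -, rfl⟩; exact (ψ.toFun y).2.2⟩ ⟨x, hx, rfl⟩

theorem phiA_le {u : I} (h : ∀ x ∈ A, ψ.toFun x ≤ u) : PhiA A ψ ≤ u :=
  Subtype.coe_le_coe.1 <| Real.sSup_le (by rintro r ⟨x, hx, rfl⟩; exact h x hx) u.2.1

theorem phiA_eq_one_of_mem {x : X} (hx : x ∈ A) (hψx : ψ.toFun x = 1) : PhiA A ψ = 1 :=
  le_antisymm le_one' (hψx ▸ le_phiA hx)

theorem phiA_empty : PhiA (∅ : Set X) ψ = 0 :=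
  Subtype.ext (by simp [PhiA, Real.sSup_empty])

theorem phiA_one_eq_one_iff : PhiA A CMap.one = 1 ↔ A.Nonempty := by
  refine ⟨fun h => nonempty_iff_ne_empty.2 fun hA => ?_,
    fun ⟨x, hx⟩ => phiA_eq_one_of_mem hx rfl⟩
  rw [hA, phiA_empty] at h
  exact zero_ne_one h

theorem phiA_tens_le (T : ContinuousTNorm) (ψ₁ ψ₂ : CMap X) :
    PhiA A (CMap.tens T ψ₁ ψ₂) ≤ T.mul (PhiA A ψ₁) (PhiA A ψ₂) :=
  phiA_le fun _ hx => T.mono (le_phiA hx) (le_phiA hx)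

end PhiA

section ClosedOrder

variable {X : Type*} [TopologicalSpace X] [CompactSpace X] [Preorder X] [OrderClosedTopology X]

theorem isClosed_upperClosure_of_isClosed {s : Set X} (hs : IsClosed s) :
    IsClosed (upperClosure s : Set X) := by
  have : (upperClosure s : Set X) = Prod.snd '' ({p : X × X | p.1 ≤ p.2} ∩ s ×ˢ univ) := by
    ext x
    simp [and_comm]
  rw [this]
  exact isClosedMap_snd_of_compactSpace _
    ((isClosed_le continuous_fst continuous_snd).inter (hs.prod isClosed_univ))

theorem isClosed_lowerClosure_of_isClosed {s : Set X} (hs : IsClosed s) :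
    IsClosed (lowerClosure s : Set X) := by
  have : (lowerClosure s : Set X) = Prod.fst '' ({p : X × X | p.1 ≤ p.2} ∩ univ ×ˢ s) := by
    ext x
    simp [and_comm]
  rw [this]
  exact isClosedMap_fst_of_compactSpace _
    ((isClosed_le continuous_fst continuous_snd).inter (isClosed_univ.prod hs))

theorem exists_isOpen_isLowerSet_closure_subset {c u : Set X} (hc : IsClosed c) (hu : IsOpen u)
    (hul : IsLowerSet u) (hcu : c ⊆ u) :
    ∃ v, IsOpen v ∧ IsLowerSet v ∧ c ⊆ v ∧ closure v ⊆ u := by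
  have hc' : IsClosed (lowerClosure c : Set X) := isClosed_lowerClosure_of_isClosed hc
  have hsep : (lowerClosure c : Set X) ×ˢ uᶜ ⊆ {p : X × X | p.2 ≤ p.1}ᶜ := by
    rintro ⟨x, y⟩ ⟨⟨z, hz, hxz⟩, hy⟩ hyx
    exact hy (hul (hyx.trans hxz) (hcu hz))
  obtain ⟨M, N, hM, hN, hcM, huN, hMN⟩ := generalized_tube_lemma hc'.isCompact
    hu.isClosed_compl.isCompact (isClosed_le continuous_snd continuous_fst).isOpen_compl hsep
  -- The largest lower subset of `M`; it is open because `M` is open and `X` is compact.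
  refine ⟨(upperClosure Mᶜ : Set X)ᶜ,
    (isClosed_upperClosure_of_isClosed hM.isClosed_compl).isOpen_compl,
    (upperClosure Mᶜ).upper.compl, fun x hx ⟨z, hzM, hzx⟩ => hzM ?_, ?_⟩
  · exact hcM ((lowerClosure c).lower hzx (subset_lowerClosure hx))
  · have hvN : (upperClosure Mᶜ : Set X)ᶜ ⊆ Nᶜ := fun x hx hxN =>
      have hxM : x ∈ M := by_contra fun hxM => hx ⟨x, hxM, le_rfl⟩
      hMN (mk_mem_prod hxM hxN) le_rfl
    exact (closure_minimal hvN hN.isClosed_compl).trans (compl_subset_comm.1 huN)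

end ClosedOrder

namespace Urysohns.CU

variable {X : Type*} [TopologicalSpace X] [Preorder X] {P : Set X → Set X → Prop}

theorem monotone_approx (hP : ∀ C U, P C U → IsLowerSet U) (n : ℕ) (c : CU P) :
    Monotone (c.approx n) := by
  induction n generalizing c with
  | zero =>
    intro x y hxy
    simp only [approx]
    by_cases hx : x ∈ c.Uᶜ
    · rw [indicator_of_mem hx, indicator_of_mem ((hP _ _ c.P_C_U).compl hxy hx)]
      exact le_rfl
    · rw [indicator_of_notMem hx]
      exact indicator_nonneg (fun _ _ => zero_le_one) _
  | succ n ih => exact fun x y hxy => midpoint_le_midpoint (ih c.left hxy) (ih c.right hxy)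

theorem monotone_lim (hP : ∀ C U, P C U → IsLowerSet U) (c : CU P) : Monotone c.lim :=
  fun _ y hxy => ciSup_mono (c.bddAbove_range_approx y) fun n => c.monotone_approx hP n hxy

end Urysohns.CU

theorem exists_cmap_eqOn_one_eqOn_zero {X : Type*} [TopologicalSpace X] [CompactSpace X]
    [Preorder X] [OrderClosedTopology X] {s t : Set X} (hs : IsClosed s) (ht : IsClosed t)
    (htu : IsUpperSet t) (hst : Disjoint s t) :
    ∃ ψ : CMap X, EqOn ψ.toFun 1 s ∧ EqOn ψ.toFun 0 t := by
  let c : Urysohns.CU fun (_ U : Set X) => IsLowerSet U :=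
    { C := s
      U := tᶜ
      P_C_U := htu.compl
      closed_C := hs
      open_U := ht.isOpen_compl
      subset := hst.subset_compl_right
      hP := fun hc hul hu hcu => by
        obtain ⟨v, hv, hvl, hcv, hvu⟩ := exists_isOpen_isLowerSet_closure_subset hc hu hul hcu
        exact ⟨v, hv, hcv, hvu, hvl, hul⟩ }
  let f : X → I := fun x => ⟨c.lim x, c.lim_mem_Icc x⟩
  refine ⟨⟨σ ∘ f, continuous_symm.comp (c.continuous_lim.subtype_mk _),
    fun x y hxy => symm_le_symm.2 (c.monotone_lim (fun _ _ h => h) hxy)⟩,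
    fun x hx => ?_, fun x hx => ?_⟩
  · simp [f, c.lim_of_mem_C x hx]
  · simp [f, c.lim_of_notMem_U x (not_not_intro hx)]

section Irreducible

variable {X : Type*} [TopologicalSpace X] [Preorder X] {A : Set X}

def IsUpperIrreducible (A : Set X) : Prop :=
  ∀ A₁ A₂ : Set X, IsClosed A₁ → IsUpperSet A₁ → IsClosed A₂ → IsUpperSet A₂ →
    A₁ ∪ A₂ = A → A = A₁ ∨ A = A₂

theorem IsUpperIrreducible.exists_lt_lt (hirr : IsUpperIrreducible A) (hA : IsClosed A)
    (hAu : IsUpperSet A) {ψ₁ ψ₂ : CMap X} {a b : I} (ha : a < PhiA A ψ₁) (hb : b < PhiA A ψ₂) :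
    ∃ x ∈ A, a < ψ₁.toFun x ∧ b < ψ₂.toFun x := by
  by_contra! h
  have hclosed (ψ : CMap X) (u : I) : IsClosed (A ∩ {x | ψ.toFun x ≤ u}) :=
    hA.inter (isClosed_le ψ.continuous' continuous_const)
  have hupper (ψ : CMap X) (u : I) : IsUpperSet (A ∩ {x | ψ.toFun x ≤ u}) :=
    hAu.inter fun _ _ hxy hx => (ψ.antitone' hxy).trans hx
  have hcover : A ∩ {x | ψ₁.toFun x ≤ a} ∪ A ∩ {x | ψ₂.toFun x ≤ b} = A := by
    rw [← inter_union_distrib_left, inter_eq_left]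
    exact fun x hx => (le_or_gt (ψ₁.toFun x) a).imp_right (h x hx)
  rcases hirr _ _ (hclosed ψ₁ a) (hupper ψ₁ a) (hclosed ψ₂ b) (hupper ψ₂ b) hcover with h₁ | h₂
  · exact ha.not_ge (phiA_le fun x hx => (h₁.subset hx).2)
  · exact hb.not_ge (phiA_le fun x hx => (h₂.subset hx).2)

theorem IsUpperIrreducible.phiA_tens (T : ContinuousTNorm) (hirr : IsUpperIrreducible A)
    (hA : IsClosed A) (hAu : IsUpperSet A) (ψ₁ ψ₂ : CMap X) :
    PhiA A (CMap.tens T ψ₁ ψ₂) = T.mul (PhiA A ψ₁) (PhiA A ψ₂) := by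
  refine le_antisymm (phiA_tens_le T ψ₁ ψ₂) ?_
  rcases (nonneg' : 0 ≤ PhiA A ψ₁).eq_or_lt with h₁ | h₁
  · rw [← h₁, T.zero_mul]
    exact nonneg'
  rcases (nonneg' : 0 ≤ PhiA A ψ₂).eq_or_lt with h₂ | h₂
  · rw [← h₂, T.mul_zero]
    exact nonneg'
  refine le_of_forall_lt fun t ht => ?_
  obtain ⟨a, ha, b, hb, htab⟩ := T.exists_lt_lt_of_lt_mul h₁ h₂ ht
  obtain ⟨x, hx, hax, hbx⟩ := hirr.exists_lt_lt hA hAu ha hb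
  exact htab.trans_le ((T.mono hax.le hbx.le).trans (le_phiA (ψ := CMap.tens T ψ₁ ψ₂) hx))

theorem isUpperIrreducible_of_phiA_tens [CompactSpace X] [OrderClosedTopology X]
    (T : ContinuousTNorm)
    (hten : ∀ ψ₁ ψ₂ : CMap X, PhiA A (CMap.tens T ψ₁ ψ₂) = T.mul (PhiA A ψ₁) (PhiA A ψ₂)) :
    IsUpperIrreducible A := by
  intro A₁ A₂ hA₁ hA₁u hA₂ hA₂u hA
  by_contra! hne
  obtain ⟨a, haA, ha₁⟩ : ∃ a ∈ A, a ∉ A₁ :=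
    not_subset.1 fun h => hne.1 (h.antisymm (hA ▸ subset_union_left))
  obtain ⟨b, hbA, hb₂⟩ : ∃ b ∈ A, b ∉ A₂ :=
    not_subset.1 fun h => hne.2 (h.antisymm (hA ▸ subset_union_right))
  obtain ⟨ψ₁, hψ₁a, hψ₁⟩ := exists_cmap_eqOn_one_eqOn_zero isClosed_Iic hA₁ hA₁u
    (disjoint_left.2 fun _ hza hz => ha₁ (hA₁u hza hz))
  obtain ⟨ψ₂, hψ₂b, hψ₂⟩ := exists_cmap_eqOn_one_eqOn_zero isClosed_Iic hA₂ hA₂u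
    (disjoint_left.2 fun _ hzb hz => hb₂ (hA₂u hzb hz))
  have hzero : PhiA A (CMap.tens T ψ₁ ψ₂) = 0 := by
    refine le_antisymm (phiA_le fun x hx => ?_) nonneg'
    rcases hA ▸ hx with hx₁ | hx₂
    · exact (congrArg (T.mul · _) (hψ₁ hx₁)).trans_le (T.zero_mul _).le
    · exact (congrArg (T.mul _) (hψ₂ hx₂)).trans_le (T.mul_zero _).le
  have := hten ψ₁ ψ₂
  rw [hzero, phiA_eq_one_of_mem haA (hψ₁a self_mem_Iic),
    phiA_eq_one_of_mem hbA (hψ₂b self_mem_Iic), T.one_mul'] at this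
  exact zero_ne_one this

end Irreducible

/-- For a closed upper subset `A` of a partially ordered compact space:
`A` is nonempty iff `Φ_A(1) = 1`, and `A` is irreducible iff `Φ_A` preserves `⊗`. -/
theorem phiA_top_and_tensor_characterisation (T : ContinuousTNorm) {X : Type*} [TopologicalSpace X] [CompactSpace X]
    [PartialOrder X] (hle : IsClosed {p : X × X | p.1 ≤ p.2})
    (A : Set X) (hA : IsClosed A) (hAu : IsUpperSet A) :
    (A.Nonempty ↔ PhiA A CMap.one = 1) ∧
    ((∀ A₁ A₂ : Set X, IsClosed A₁ → IsUpperSet A₁ → IsClosed A₂ → IsUpperSet A₂ →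
        A₁ ∪ A₂ = A → A = A₁ ∨ A = A₂) ↔
      ∀ ψ₁ ψ₂ : CMap X, PhiA A (CMap.tens T ψ₁ ψ₂) = T.mul (PhiA A ψ₁) (PhiA A ψ₂)) := by
  have : OrderClosedTopology X := ⟨hle⟩
  exact ⟨phiA_one_eq_one_iff.symm,
    fun hirr => IsUpperIrreducible.phiA_tens T hirr hA hAu, isUpperIrreducible_of_phiA_tens T⟩
end

section
/- Let ⊗ be a continuous t-norm on [0,1], let X be a partially ordered compact space, and let Φ : CX → [0,1] be a map. Then: (1) if Φ satisfies (Mon), (Act) and (Ten)lax, then Φ satisfies condition (A); (2) if ⊗ has no nilpotent elements and Φ satisfies (Mon) and (Act), then Φ satisfies condition (A). -/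
open unitInterval Set

/-
Given `ψ(x) = u > 0` and `Φ(ψ) = 0`, pick `0 < v < u` and rescale `ψ` to
`ψ̄ = clamp ((ψ - v) / (u - v))`: then `ψ̄(x) = 1` and `v ⊗ ψ̄ ≤ ψ`, so `v ⊗ Φ(ψ̄) = 0` by (Mon) and
(Act). Without nilpotents this forces `Φ(ψ̄) = 0`, since `min(v, Φ(ψ̄))` squares to `0`.
Under (Ten)lax, `Φ(ψ̄ⁿ) ≤ Φ(ψ̄)ⁿ`, and the powers of `w = Φ(ψ̄)` decrease to an idempotent `e ≤ w`;
an idempotent acts as the identity below itself, so `e ≥ v` would give `v = v ⊗ e ≤ v ⊗ w = 0`.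
Hence `wⁿ < v` for some `n`, and `Φ(ψ̄ⁿ⁺¹) ≤ w ⊗ wⁿ ≤ w ⊗ v = 0`.
-/

open Filter Topology

namespace ContinuousTNorm

variable (T : ContinuousTNorm)

lemma mul_le_right (x y : I) : T.mul x y ≤ y := by
  simpa only [T.one_mul'] using T.mono (le_one' : x ≤ 1) (le_refl y)

lemma mul_le_left (x y : I) : T.mul x y ≤ x := T.comm x y ▸ T.mul_le_right y x

lemma mul_one (x : I) : T.mul x 1 = x := T.comm x 1 ▸ T.one_mul' x

lemma pow_one (x : I) : T.pow x 1 = x := T.mul_one x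

lemma one_pow (n : ℕ) : T.pow 1 n = 1 := by
  induction n with
  | zero => rfl
  | succ n ih => exact (congrArg (T.mul 1) ih).trans (T.one_mul' 1)

lemma pow_add (x : I) (m n : ℕ) : T.pow x (m + n) = T.mul (T.pow x m) (T.pow x n) := by
  induction m with
  | zero => rw [Nat.zero_add]; exact (T.one_mul' _).symm
  | succ m ih =>
    rw [Nat.add_right_comm]
    exact (congrArg (T.mul x) ih).trans (T.assoc _ _ _).symm

lemma pow_antitone (x : I) : Antitone (T.pow x) :=
  antitone_nat_of_succ_le fun n => T.mul_le_right x (T.pow x n)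

/-- The intermediate value theorem writes `x = t ⊗ e`, and then `x ⊗ e = t ⊗ e ⊗ e = x`. -/
lemma mul_eq_left_of_le_idempotent {e x : I} (he : T.mul e e = e) (hx : x ≤ e) :
    T.mul x e = x := by
  have hcont : Continuous fun t : I => T.mul t e :=
    T.continuous.comp (continuous_id.prodMk continuous_const)
  have h0 : T.mul 0 e = 0 := le_antisymm (T.mul_le_left 0 e) nonneg'
  obtain ⟨t, rfl⟩ : ∃ t, T.mul t e = x :=
    intermediate_value_univ (0 : I) e hcont (by rw [h0, he]; exact ⟨nonneg', hx⟩)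
  rw [T.assoc, he]

lemma exists_idempotent_tendsto_pow (w : I) :
    ∃ e, T.mul e e = e ∧ e ≤ w ∧ Tendsto (T.pow w) atTop (𝓝 e) := by
  have hlim : Tendsto (T.pow w) atTop (𝓝 (⨅ n, T.pow w n)) :=
    tendsto_atTop_iInf (T.pow_antitone w)
  have hdouble : Tendsto (fun n => T.mul (T.pow w n) (T.pow w n)) atTop
      (𝓝 (⨅ n, T.pow w n)) := by
    simpa only [← T.pow_add, Function.comp_def, id] using
      hlim.comp (tendsto_id.atTop_add_atTop tendsto_id)
  refine ⟨⨅ n, T.pow w n, ?_, (iInf_le _ 1).trans_eq (T.pow_one w), hlim⟩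
  exact tendsto_nhds_unique ((T.continuous.tendsto _).comp (hlim.prodMk_nhds hlim)) hdouble

lemma exists_pow_eq_zero_of_mul_eq_zero {v w : I} (hv : 0 < v) (hvw : T.mul v w = 0) :
    ∃ n, T.pow w n = 0 := by
  obtain ⟨e, he, hew, hlim⟩ := T.exists_idempotent_tendsto_pow w
  have hev : e < v := by
    refine lt_of_not_ge fun hve => hv.not_ge ?_
    calc v = T.mul v e := (T.mul_eq_left_of_le_idempotent he hve).symm
      _ ≤ T.mul v w := T.mono le_rfl hew
      _ = 0 := hvw
  obtain ⟨n, hn⟩ := (hlim.eventually_lt_const hev).exists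
  refine ⟨n + 1, le_antisymm ?_ nonneg'⟩
  calc T.pow w (n + 1) = T.mul w (T.pow w n) := rfl
    _ ≤ T.mul w v := T.mono le_rfl hn.le
    _ = 0 := T.comm w v ▸ hvw

lemma eq_zero_of_mul_eq_zero (hnil : ∀ v : I, v ≠ 0 → ∀ n : ℕ, T.pow v n ≠ 0) {v w : I}
    (hv : 0 < v) (hvw : T.mul v w = 0) : w = 0 := by
  have hsq : T.pow (min v w) 2 = 0 := le_antisymm
    (calc T.pow (min v w) 2 = T.mul (min v w) (min v w) := congrArg _ (T.pow_one _)
      _ ≤ T.mul v w := T.mono (min_le_left v w) (min_le_right v w)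
      _ = 0 := hvw) nonneg'
  by_contra hw
  exact hnil _ (ne_of_gt (lt_min hv (lt_of_le_of_ne nonneg' (Ne.symm hw)))) 2 hsq

end ContinuousTNorm

namespace CMap

variable {X : Type*} [TopologicalSpace X] [Preorder X]

def tpow (T : ContinuousTNorm) (ψ : CMap X) : ℕ → CMap X
  | 0 => one
  | n + 1 => tens T ψ (tpow T ψ n)

lemma tpow_apply (T : ContinuousTNorm) (ψ : CMap X) (n : ℕ) (x : X) :
    (ψ.tpow T n).toFun x = T.pow (ψ.toFun x) n := by
  induction n with
  | zero => rfl
  | succ n ih => exact congrArg (T.mul (ψ.toFun x)) ih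

noncomputable def rescale (ψ : CMap X) {v u : I} (h : v < u) : CMap X where
  toFun y := projIcc 0 1 zero_le_one ((ψ.toFun y - v) / (u - v))
  continuous' := continuous_projIcc.comp
    (((continuous_subtype_val.comp ψ.continuous').sub continuous_const).div_const _)
  antitone' _ _ hxy := monotone_projIcc _ <| div_le_div_of_nonneg_right
    (sub_le_sub_right (Subtype.coe_le_coe.2 (ψ.antitone' hxy)) _)
    (sub_nonneg.2 (Subtype.coe_le_coe.2 h.le))

lemma rescale_apply_of_le_left (ψ : CMap X) {v u : I} (h : v < u) {y : X}
    (hy : ψ.toFun y ≤ v) :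
    (ψ.rescale h).toFun y = 0 :=
  projIcc_of_le_left zero_le_one <|
    div_nonpos_of_nonpos_of_nonneg (sub_nonpos.2 hy) (sub_nonneg.2 (Subtype.coe_le_coe.2 h.le))

lemma rescale_apply_of_right_le (ψ : CMap X) {v u : I} (h : v < u) {y : X}
    (hy : u ≤ ψ.toFun y) :
    (ψ.rescale h).toFun y = 1 :=
  projIcc_of_right_le zero_le_one <|
    (one_le_div (sub_pos.2 (Subtype.coe_lt_coe.2 h))).2
      (sub_le_sub_right (Subtype.coe_le_coe.2 hy) _)

lemma mul_rescale_apply_le (T : ContinuousTNorm) (ψ : CMap X) {v u : I} (h : v < u) (y : X) :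
    T.mul v ((ψ.rescale h).toFun y) ≤ ψ.toFun y := by
  rcases le_total v (ψ.toFun y) with hvy | hyv
  · exact (T.mul_le_left _ _).trans hvy
  · rw [ψ.rescale_apply_of_le_left h hyv]
    exact (T.mul_le_right _ _).trans nonneg'

end CMap

section

variable {X : Type*} [TopologicalSpace X] [Preorder X] {T : ContinuousTNorm} {Φ : CMap X → I}

lemma Mon.exists_mul_eq_zero (hMon : Mon Φ) (hAct : Act T Φ) {ψ : CMap X} {x : X}
    (h0 : Φ ψ = 0) (hx : 0 < ψ.toFun x) :
    ∃ (v : I) (φ : CMap X), 0 < v ∧ φ.toFun x = 1 ∧ T.mul v (Φ φ) = 0 := by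
  obtain ⟨v, hv, hvx⟩ := exists_between hx
  refine ⟨v, ψ.rescale hvx, hv, ψ.rescale_apply_of_right_le hvx le_rfl, le_antisymm ?_ nonneg'⟩
  calc T.mul v (Φ (ψ.rescale hvx)) = Φ (CMap.smul T v (ψ.rescale hvx)) := (hAct _ _).symm
    _ ≤ Φ ψ := hMon _ _ (ψ.mul_rescale_apply_le T hvx)
    _ = 0 := h0

lemma TenLax.apply_tpow_le (hTen : TenLax T Φ) (ψ : CMap X) (n : ℕ) :
    Φ (ψ.tpow T n) ≤ T.pow (Φ ψ) n := by
  induction n with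
  | zero => exact le_one'
  | succ n ih => exact (hTen _ _).trans (T.mono le_rfl ih)

end

theorem conditionA_of_mon_act_general (T : ContinuousTNorm) {X : Type*} [TopologicalSpace X]
    [PartialOrder X] (Φ : CMap X → I) :
    (Mon Φ → Act T Φ → TenLax T Φ → CondA Φ) ∧
    ((∀ v : I, v ≠ 0 → ∀ n : ℕ, T.pow v n ≠ 0) → Mon Φ → Act T Φ → CondA Φ) := by
  refine ⟨fun hMon hAct hTen x ψ h0 hx => ?_, fun hnil hMon hAct x ψ h0 hx => ?_⟩
  · obtain ⟨v, φ, hv, hφx, hvφ⟩ := hMon.exists_mul_eq_zero hAct h0 hx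
    obtain ⟨n, hn⟩ := T.exists_pow_eq_zero_of_mul_eq_zero hv hvφ
    refine ⟨φ.tpow T n, by rw [CMap.tpow_apply, hφx, T.one_pow], le_antisymm ?_ nonneg'⟩
    exact hn ▸ hTen.apply_tpow_le φ n
  · obtain ⟨v, φ, hv, hφx, hvφ⟩ := hMon.exists_mul_eq_zero hAct h0 hx
    exact ⟨φ, hφx, T.eq_zero_of_mul_eq_zero hnil hv hvφ⟩

/-- `(Mon)`, `(Act)` and `(Ten)lax` imply condition `(A)`; if the t-norm has no nilpotent
elements, `(Mon)` and `(Act)` alone imply condition `(A)`. -/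
theorem conditionA_of_mon_act (T : ContinuousTNorm) {X : Type*} [TopologicalSpace X] [CompactSpace X]
    [PartialOrder X] (hle : IsClosed {p : X × X | p.1 ≤ p.2})
    (Φ : CMap X → I) :
    (Mon Φ → Act T Φ → TenLax T Φ → CondA Φ) ∧
    ((∀ v : I, v ≠ 0 → ∀ n : ℕ, T.pow v n ≠ 0) → Mon Φ → Act T Φ → CondA Φ) :=
  conditionA_of_mon_act_general T Φ
end
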